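/- An embedded star-shaped closed curve has Chow–Liou–Tsai turning angle greater than -π; that is, for every connected subarc Γ of the curve, the total curvature ∫_Γ κ ds > -π. -/

import Mathlib

open Real Complex intervalIntegral

lemma hasDerivAt_intervalIntegral_of_continuous {E : Type*} [NormedAddCommGroup E]
    [NormedSpace ℝ E] [CompleteSpace E] {f : ℝ → E} (hf : Continuous f) (a b : ℝ) :
    HasDerivAt (fun u => ∫ x in a..u, f x) (f b) b :=
  intervalIntegral.integral_hasDerivAt_right (hf.intervalIntegrable a b)
    (hf.stronglyMeasurableAtFilter _ _) hf.continuousAt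

lemma star_aux (γ : ℝ → ℝ × ℝ) (P : ℝ × ℝ)
    (hsmooth : ContDiff ℝ (⊤ : ℕ∞) γ)
    (hunit : ∀ s, ((deriv γ s).1)^2 + ((deriv γ s).2)^2 = 1)
    (hstar : ∀ s, 0 < ((γ s).1 - P.1) * (deriv γ s).2 - ((γ s).2 - P.2) * (deriv γ s).1)
    (s₁ s₂ : ℝ) (hlt : s₁ < s₂) :
    -π < ∫ s in s₁..s₂,
        ((deriv γ s).1 * (deriv (deriv γ) s).2 -
          (deriv γ s).2 * (deriv (deriv γ) s).1) := by
  -- basic differentiability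
  have hdiff : Differentiable ℝ γ := hsmooth.differentiable (by simp)
  have hsm : ContDiff ℝ ((⊤ : ℕ∞) : WithTop ℕ∞) γ := hsmooth.of_le (by simp)
  have hd2 : ContDiff ℝ ((⊤ : ℕ∞) : WithTop ℕ∞) (deriv γ) := (contDiff_infty_iff_deriv.mp hsm).2
  have hdiff2 : Differentiable ℝ (deriv γ) := hd2.differentiable (by simp)
  have hcont2 : Continuous (deriv (deriv γ)) :=
    ((contDiff_infty_iff_deriv.mp hd2).2).continuous
  -- complex tangent and position
  set T : ℝ → ℂ := fun s => ⟨(deriv γ s).1, (deriv γ s).2⟩ with hTdef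
  set h : ℝ → ℂ := fun s => ⟨(γ s).1 - P.1, (γ s).2 - P.2⟩ with hhdef
  set κ : ℝ → ℝ := fun s =>
    (deriv γ s).1 * (deriv (deriv γ) s).2 - (deriv γ s).2 * (deriv (deriv γ) s).1 with hκdef
  -- component derivatives
  have hx : ∀ s, HasDerivAt (fun u => (γ u).1) (deriv γ s).1 s := by
    intro s
    exact ((ContinuousLinearMap.fst ℝ ℝ ℝ).hasFDerivAt.comp_hasDerivAt s
      (hdiff s).hasDerivAt)
  have hy : ∀ s, HasDerivAt (fun u => (γ u).2) (deriv γ s).2 s := by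
    intro s
    exact ((ContinuousLinearMap.snd ℝ ℝ ℝ).hasFDerivAt.comp_hasDerivAt s
      (hdiff s).hasDerivAt)
  have hx' : ∀ s, HasDerivAt (fun u => (deriv γ u).1) (deriv (deriv γ) s).1 s := by
    intro s
    exact ((ContinuousLinearMap.fst ℝ ℝ ℝ).hasFDerivAt.comp_hasDerivAt s
      (hdiff2 s).hasDerivAt)
  have hy' : ∀ s, HasDerivAt (fun u => (deriv γ u).2) (deriv (deriv γ) s).2 s := by
    intro s
    exact ((ContinuousLinearMap.snd ℝ ℝ ℝ).hasFDerivAt.comp_hasDerivAt s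
      (hdiff2 s).hasDerivAt)
  have hcontx' : Continuous (fun s => (deriv γ s).1) :=
    (continuous_fst.comp hd2.continuous)
  have hconty' : Continuous (fun s => (deriv γ s).2) :=
    (continuous_snd.comp hd2.continuous)
  have hcontx'' : Continuous (fun s => (deriv (deriv γ) s).1) :=
    (continuous_fst.comp hcont2)
  have hconty'' : Continuous (fun s => (deriv (deriv γ) s).2) :=
    (continuous_snd.comp hcont2)
  -- orthogonality: x'x'' + y'y'' = 0
  have horth : ∀ s, (deriv γ s).1 * (deriv (deriv γ) s).1
      + (deriv γ s).2 * (deriv (deriv γ) s).2 = 0 := by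
    intro s
    have hde : HasDerivAt (fun u => ((deriv γ u).1)^2 + ((deriv γ u).2)^2)
        (2 * (deriv γ s).1 * (deriv (deriv γ) s).1
          + 2 * (deriv γ s).2 * (deriv (deriv γ) s).2) s := by
      have := ((hx' s).pow 2).add ((hy' s).pow 2)
      exact this.congr_deriv (by norm_num)
    have hconst : HasDerivAt (fun _ : ℝ => (1:ℝ)) 0 s := hasDerivAt_const s 1
    have : (fun u => ((deriv γ u).1)^2 + ((deriv γ u).2)^2) = fun _ : ℝ => (1:ℝ) := by
      funext u; exact hunit u
    rw [this] at hde
    have := hde.unique hconst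
    linarith
  -- second derivative relations
  have hx'' : ∀ s, (deriv (deriv γ) s).1 = -κ s * (deriv γ s).2 := by
    intro s
    have h1 := hunit s
    have h2 := horth s
    simp only [hκdef]
    linear_combination (-(deriv (deriv γ) s).1) * h1 + (deriv γ s).1 * h2
  have hy'' : ∀ s, (deriv (deriv γ) s).2 = κ s * (deriv γ s).1 := by
    intro s
    have h1 := hunit s
    have h2 := horth s
    simp only [hκdef]
    linear_combination (-(deriv (deriv γ) s).2) * h1 + (deriv γ s).2 * h2
  -- complex tangent: continuity and derivative
  have hTfun : T = fun s => ((deriv γ s).1 : ℂ) + ((deriv γ s).2 : ℂ) * Complex.I := by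
    funext s; apply Complex.ext <;> simp [hTdef]
  have hhfun : h = fun s => (((γ s).1 - P.1 : ℝ) : ℂ) + (((γ s).2 - P.2 : ℝ) : ℂ) * Complex.I := by
    funext s; apply Complex.ext <;> simp [hhdef]
  have hT : ∀ s, HasDerivAt T
      (((deriv (deriv γ) s).1 : ℂ) + ((deriv (deriv γ) s).2 : ℂ) * Complex.I) s := by
    intro s
    rw [hTfun]
    exact ((hx' s).ofReal_comp).add (((hy' s).ofReal_comp).mul_const Complex.I)
  have hh : ∀ s, HasDerivAt h (T s) s := by
    intro s
    rw [hhfun, hTfun]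
    exact (((hx s).sub_const P.1).ofReal_comp).add
      ((((hy s).sub_const P.2).ofReal_comp).mul_const Complex.I)
  have hTcont : Continuous T := by
    rw [hTfun]
    exact (Complex.continuous_ofReal.comp hcontx').add
      ((Complex.continuous_ofReal.comp hconty').mul continuous_const)
  have hhcont : Continuous h := by
    rw [hhfun]
    exact (Complex.continuous_ofReal.comp ((continuous_fst.comp hdiff.continuous).sub
      continuous_const)).add ((Complex.continuous_ofReal.comp
      ((continuous_snd.comp hdiff.continuous).sub continuous_const)).mul continuous_const)
  -- star-shapedness in complex terms
  have hu : ∀ s, 0 < (h s).re * (T s).im - (h s).im * (T s).re := by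
    intro s
    simpa [hTdef, hhdef] using hstar s
  have hhne : ∀ s, h s ≠ 0 := by
    intro s hs
    have := hu s
    rw [hs] at this
    simp at this
  have hTne : ∀ s, T s ≠ 0 := by
    intro s hs
    have := hu s
    rw [hs] at this
    simp at this
  -- z = T / h has positive imaginary part
  set z : ℝ → ℂ := fun s => T s / h s with hzdef
  have hzim : ∀ s, 0 < (z s).im := by
    intro s
    have hnormsq : 0 < Complex.normSq (h s) := Complex.normSq_pos.mpr (hhne s)
    have hnum := hu s
    have : (z s).im = ((h s).re * (T s).im - (h s).im * (T s).re) / Complex.normSq (h s) := by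
      rw [hzdef]
      simp only [Complex.div_im]
      ring
    rw [this]
    positivity
  have hzcont : Continuous z := hTcont.div hhcont hhne
  have hzne : ∀ s, z s ≠ 0 := fun s => div_ne_zero (hTne s) (hhne s)
  -- curvature continuity
  have hκcont : Continuous κ := by
    rw [hκdef]
    exact (hcontx'.mul hconty'').sub (hconty'.mul hcontx'')
  -- angle functions
  set Θ : ℝ → ℝ := fun s => ∫ σ in s₁..s, κ σ with hΘdef
  set W : ℝ → ℂ := fun s => ∫ σ in s₁..s, z σ with hWdef
  have hΘ : ∀ s, HasDerivAt Θ (κ s) s := fun s =>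
    hasDerivAt_intervalIntegral_of_continuous hκcont s₁ s
  have hW : ∀ s, HasDerivAt W (z s) s := fun s =>
    hasDerivAt_intervalIntegral_of_continuous hzcont s₁ s
  have hΘ1 : Θ s₁ = 0 := intervalIntegral.integral_same
  have hW1 : W s₁ = 0 := intervalIntegral.integral_same
  -- ODE for T: T' = I κ T
  have hTode : ∀ s, (((deriv (deriv γ) s).1 : ℂ) + ((deriv (deriv γ) s).2 : ℂ) * Complex.I)
      = Complex.I * (κ s : ℂ) * T s := by
    intro s
    rw [hx'' s, hy'' s]
    apply Complex.ext <;> simp [hTdef] <;> ring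
  -- T s = T s₁ * exp (I Θ s)
  have hTformula : ∀ s, T s = T s₁ * Complex.exp ((Θ s : ℂ) * Complex.I) := by
    have hF : ∀ s, HasDerivAt (fun u => T u * Complex.exp (-((Θ u : ℂ) * Complex.I))) 0 s := by
      intro s
      have hexp : HasDerivAt (fun u => Complex.exp (-((Θ u : ℂ) * Complex.I)))
          (Complex.exp (-((Θ s : ℂ) * Complex.I)) * (-((κ s : ℂ) * Complex.I))) s := by
        have h1 : HasDerivAt (fun u => -((Θ u : ℂ) * Complex.I)) (-((κ s : ℂ) * Complex.I)) s :=
          (((hΘ s).ofReal_comp).mul_const Complex.I).neg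
        exact (h1.cexp).congr_deriv (by ring)
      have := (hT s).mul hexp
      rw [hTode s] at this
      exact this.congr_deriv (by ring)
    have hFD : Differentiable ℝ (fun u => T u * Complex.exp (-((Θ u : ℂ) * Complex.I))) :=
      fun s => (hF s).differentiableAt
    have hFz : ∀ s, deriv (fun u => T u * Complex.exp (-((Θ u : ℂ) * Complex.I))) s = 0 :=
      fun s => (hF s).deriv
    intro s
    have := is_const_of_deriv_eq_zero hFD hFz s s₁
    rw [hΘ1] at this
    simp only [Complex.ofReal_zero, zero_mul, neg_zero, Complex.exp_zero, mul_one] at this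
    calc T s = T s * Complex.exp (-((Θ s : ℂ) * Complex.I))
            * Complex.exp ((Θ s : ℂ) * Complex.I) := by
          rw [mul_assoc, ← Complex.exp_add]; simp
      _ = T s₁ * Complex.exp ((Θ s : ℂ) * Complex.I) := by rw [this]
  -- h s = h s₁ * exp (W s)
  have hhformula : ∀ s, h s = h s₁ * Complex.exp (W s) := by
    have hG : ∀ s, HasDerivAt (fun u => h u * Complex.exp (-W u)) 0 s := by
      intro s
      have hexp : HasDerivAt (fun u => Complex.exp (-W u))
          (Complex.exp (-W s) * (-z s)) s := ((hW s).neg.cexp).congr_deriv (by simp only [Pi.neg_apply, mul_neg, neg_mul, mul_comm])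
      have := (hh s).mul hexp
      have hhz : h s * z s = T s := by rw [hzdef]; field_simp; exact mul_div_cancel_left₀ _ (hhne s)
      have hzh : h s * (Complex.exp (-W s) * (-z s)) = -(T s * Complex.exp (-W s)) := by
        linear_combination (-(Complex.exp (-W s))) * hhz
      apply this.congr_deriv
      rw [hzh]
      ring
    have hGD : Differentiable ℝ (fun u => h u * Complex.exp (-W u)) :=
      fun s => (hG s).differentiableAt
    have hGz : ∀ s, deriv (fun u => h u * Complex.exp (-W u)) s = 0 :=
      fun s => (hG s).deriv
    intro s
    have := is_const_of_deriv_eq_zero hGD hGz s s₁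
    rw [hW1] at this
    simp only [neg_zero, Complex.exp_zero, mul_one] at this
    calc h s = h s * Complex.exp (-W s) * Complex.exp (W s) := by
          rw [mul_assoc, ← Complex.exp_add]; simp
      _ = h s₁ * Complex.exp (W s) := by rw [this]
  -- the angle function β
  set β : ℝ → ℝ := fun s => Θ s - (W s).im + Complex.arg (z s₁) with hβdef
  have hzabs : 0 < ‖z s₁‖ := norm_pos_iff.mpr (hzne s₁)
  have hzf : ∀ s, z s = z s₁ * Complex.exp ((Θ s : ℂ) * Complex.I - W s) := by
    intro s
    rw [hzdef]
    simp only
    rw [hTformula s, hhformula s, Complex.exp_sub, mul_div_mul_comm]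
  have him : ∀ s, (z s).im = ‖z s₁‖ * Real.exp (-(W s).re) * Real.sin (β s) := by
    intro s
    rw [hzf s, Complex.mul_im, Complex.exp_re, Complex.exp_im]
    have hre1 : ((Θ s : ℂ) * Complex.I - W s).re = -(W s).re := by simp
    have him1 : ((Θ s : ℂ) * Complex.I - W s).im = Θ s - (W s).im := by simp
    rw [hre1, him1]
    have hzr : (z s₁).re = ‖z s₁‖ * Real.cos (Complex.arg (z s₁)) := by
      rw [Complex.cos_arg (hzne s₁)]
      field_simp
    have hzi : (z s₁).im = ‖z s₁‖ * Real.sin (Complex.arg (z s₁)) := by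
      rw [Complex.sin_arg]
      field_simp
    rw [hzr, hzi, hβdef]
    simp only
    rw [Real.sin_add]
    ring
  have hsinpos : ∀ s, 0 < Real.sin (β s) := by
    intro s
    have h1 := hzim s
    rw [him s] at h1
    have hA : 0 < ‖z s₁‖ * Real.exp (-(W s).re) := by positivity
    by_contra hns
    push_neg at hns
    nlinarith
  have hβcont : Continuous β := by
    have hΘc : Continuous Θ := continuous_iff_continuousAt.mpr fun s => (hΘ s).continuousAt
    have hWc : Continuous W := continuous_iff_continuousAt.mpr fun s => (hW s).continuousAt
    rw [hβdef]
    exact (hΘc.sub (Complex.continuous_im.comp hWc)).add continuous_const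
  have hβ1 : β s₁ = Complex.arg (z s₁) := by rw [hβdef]; simp [hΘ1, hW1]
  have hβ1pos : 0 < β s₁ ∧ β s₁ < π := by
    have hs1 := hsinpos s₁
    have harg := Complex.arg_mem_Ioc (z s₁)
    rw [hβ1] at hs1 ⊢
    constructor
    · by_contra hle
      push_neg at hle
      have : Real.sin (Complex.arg (z s₁)) ≤ 0 :=
        Real.sin_nonpos_of_nonpos_of_neg_pi_le hle harg.1.le
      linarith
    · rcases lt_or_eq_of_le harg.2 with hc | hc
      · exact hc
      · rw [hc] at hs1
        simp [Real.sin_pi] at hs1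
  have hβ2lt : β s₂ < π := by
    by_contra hge
    push_neg at hge
    have hsub := intermediate_value_Icc hlt.le hβcont.continuousOn
    have hmem : π ∈ Set.Icc (β s₁) (β s₂) := ⟨hβ1pos.2.le, hge⟩
    obtain ⟨s0, _, hs0⟩ := hsub hmem
    have := hsinpos s0
    rw [hs0, Real.sin_pi] at this
    exact lt_irrefl 0 this
  have hβ2pos : 0 < β s₂ := by
    by_contra hle
    push_neg at hle
    have hsub := intermediate_value_Icc' hlt.le hβcont.continuousOn
    have hmem : (0:ℝ) ∈ Set.Icc (β s₂) (β s₁) := ⟨hle, hβ1pos.1.le⟩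
    obtain ⟨s0, _, hs0⟩ := hsub hmem
    have := hsinpos s0
    rw [hs0, Real.sin_zero] at this
    exact lt_irrefl 0 this
  have hImW : StrictMono (fun s => (W s).im) := by
    apply strictMono_of_deriv_pos
    intro s
    have hd : HasDerivAt (fun s => (W s).im) ((z s).im) s :=
      (Complex.imCLM.hasFDerivAt.comp_hasDerivAt s (hW s))
    rw [hd.deriv]
    exact hzim s
  have hImW2 : 0 < (W s₂).im := by
    have h2 := hImW hlt
    simp only at h2
    rw [hW1] at h2
    simpa using h2
  have hgoal : (∫ s in s₁..s₂, ((deriv γ s).1 * (deriv (deriv γ) s).2 -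
      (deriv γ s).2 * (deriv (deriv γ) s).1)) = Θ s₂ := by
    rw [hΘdef, hκdef]
  rw [hgoal]
  have hΘ2 : Θ s₂ = β s₂ - β s₁ + (W s₂).im := by
    rw [hβ1]
    simp only [hβdef]
    ring
  rw [hΘ2]
  linarith [hβ2pos, hβ1pos.2, hImW2]

open Real in
/-- An embedded star-shaped closed curve has Chow–Liou–Tsai
turning angle greater than -π: every connected subarc Γ has total curvature
∫_Γ κ ds > -π.  The curve γ is smooth, closed of length ℓ, parametrized by
arclength, embedded, and star-shaped with respect to P (the support function
w.r.t. the inner unit normal N(s) = (-(γ'(s)).2, (γ'(s)).1) is positive). -/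
theorem star_shaped_turning_angle_gt_neg_pi
    (γ : ℝ → ℝ × ℝ) (ℓ : ℝ) (P : ℝ × ℝ)
    (hℓ : 0 < ℓ)
    (hsmooth : ContDiff ℝ (⊤ : ℕ∞) γ)
    (hper : Function.Periodic γ ℓ)
    (hunit : ∀ s, ((deriv γ s).1)^2 + ((deriv γ s).2)^2 = 1)
    (hemb : ∀ s t : ℝ, γ s = γ t → ∃ k : ℤ, t = s + k * ℓ)
    (hstar : ∀ s, 0 <
      -(((γ s).1 - P.1) * (-(deriv γ s).2) + ((γ s).2 - P.2) * (deriv γ s).1)) :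
    ∀ s₁ s₂ : ℝ, s₁ < s₂ → s₂ - s₁ ≤ ℓ →
      -π < ∫ s in s₁..s₂,
        ((deriv γ s).1 * (deriv (deriv γ) s).2 -
          (deriv γ s).2 * (deriv (deriv γ) s).1) := by
  intro s₁ s₂ hlt _
  refine star_aux γ P hsmooth hunit (fun s => ?_) s₁ s₂ hlt
  have := hstar s
  linarith [this]
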